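/- Let {X_i : i in N} be a quasi-uniform family of finite-valued random variables. Then for any subsets α ⊆ β ⊆ N, the number of extensions is constant: for every x_α in the support of X_α, the number of x_β in the support of X_β whose restriction to α equals x_α is exactly 2^{H(X_β) − H(X_α)} (in particular it does not depend on x_α). -/

import Mathlib

open scoped Classical BigOperators

/-- Probability of the event `X = a` under the mass function `p`. -/
noncomputable def dist {Ω : Type*} [Fintype Ω] (p : Ω → ℝ) {A : Type*} (X : Ω → A) (a : A) : ℝ :=
  ∑ ω ∈ Finset.univ.filter (fun ω => X ω = a), p ω

/-- The (finite) support of a random variable. -/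
noncomputable def supp {Ω : Type*} [Fintype Ω] (p : Ω → ℝ) {A : Type*} (X : Ω → A) : Finset A :=
  (Finset.univ.image X).filter (fun a => 0 < dist p X a)

/-- Shannon entropy (in bits) of a random variable. -/
noncomputable def entH {Ω : Type*} [Fintype Ω] (p : Ω → ℝ) {A : Type*} (X : Ω → A) : ℝ :=
  -∑ a ∈ Finset.univ.image X, dist p X a * Real.logb 2 (dist p X a)

/-- `p` is a probability mass function. -/
def IsProb {Ω : Type*} [Fintype Ω] (p : Ω → ℝ) : Prop :=
  (∀ ω, 0 ≤ p ω) ∧ ∑ ω, p ω = 1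

/-- `X` is uniformly distributed over its support. -/
def UniformOnSupport {Ω : Type*} [Fintype Ω] (p : Ω → ℝ) {A : Type*} (X : Ω → A) : Prop :=
  ∀ a ∈ supp p X, dist p X a = ((supp p X).card : ℝ)⁻¹

/-- The tuple `(X_i : i ∈ α)` as a single random variable. -/
noncomputable def tupleOn {Ω N A : Type*} (X : N → Ω → A) (α : Finset N) (ω : Ω) :
    {i // i ∈ α} → A := fun i => X i.1 ω

/-- A family of random variables is quasi-uniform if every sub-tuple is
uniformly distributed over its support. -/
def QuasiUniformFamily {Ω : Type*} [Fintype Ω] {N A : Type*} (p : Ω → ℝ) (X : N → Ω → A) : Prop :=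
  ∀ α : Finset N, UniformOnSupport p (tupleOn X α)

/-!
Restriction from `β` to `α` pushes the law of `X_β` forward to the law of `X_α`, so
`P(X_α = x_α)` is the sum of `P(X_β = x_β)` over the extensions `x_β` of `x_α` in the support.
By quasi-uniformity the left side is `1 / |supp X_α|` and every summand is `1 / |supp X_β|`, so
there are exactly `|supp X_β| / |supp X_α|` extensions; and a variable uniform on its support
has entropy `log₂` of the support size.
-/

section

variable {Ω A B : Type*} [Fintype Ω] {p : Ω → ℝ}

theorem mem_supp_iff {X : Ω → A} {a : A} : a ∈ supp p X ↔ 0 < dist p X a := by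
  refine ⟨fun h => (Finset.mem_filter.mp h).2, fun h => Finset.mem_filter.mpr ⟨?_, h⟩⟩
  obtain ⟨ω, hω, -⟩ := Finset.exists_ne_zero_of_sum_ne_zero h.ne'
  exact Finset.mem_image.mpr ⟨ω, Finset.mem_univ ω, (Finset.mem_filter.mp hω).2⟩

theorem dist_nonneg_of_nonneg (hp : ∀ ω, 0 ≤ p ω) (X : Ω → A) (a : A) : 0 ≤ dist p X a :=
  Finset.sum_nonneg fun ω _ => hp ω

theorem dist_eq_zero_of_notMem_supp (hp : ∀ ω, 0 ≤ p ω) {X : Ω → A} {a : A}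
    (ha : a ∉ supp p X) : dist p X a = 0 :=
  (not_lt.mp (mt mem_supp_iff.mpr ha)).antisymm (dist_nonneg_of_nonneg hp X a)

theorem apply_mem_supp (hp : ∀ ω, 0 ≤ p ω) (X : Ω → A) {ω : Ω} (hω : 0 < p ω) :
    X ω ∈ supp p X :=
  mem_supp_iff.mpr <| hω.trans_le <|
    Finset.single_le_sum (fun ω _ => hp ω) (Finset.mem_filter.mpr ⟨Finset.mem_univ ω, rfl⟩)

theorem supp_nonempty (hp : IsProb p) (X : Ω → A) : (supp p X).Nonempty := by
  obtain ⟨ω, -, hω⟩ := Finset.exists_lt_of_sum_lt (s := Finset.univ) (f := fun _ => (0 : ℝ))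
    (g := p) (by simp [hp.2])
  exact ⟨X ω, apply_mem_supp hp.1 X hω⟩

theorem entH_eq_logb_card (hp : ∀ ω, 0 ≤ p ω) {X : Ω → A} (hu : UniformOnSupport p X) :
    entH p X = Real.logb 2 (supp p X).card := by
  have hsupp : ∑ a ∈ Finset.univ.image X, dist p X a * Real.logb 2 (dist p X a)
      = ∑ a ∈ supp p X, dist p X a * Real.logb 2 (dist p X a) :=
    (Finset.sum_subset (Finset.filter_subset _ _) fun a _ ha => by
      rw [dist_eq_zero_of_notMem_supp hp ha, zero_mul]).symm
  rw [entH, hsupp, Finset.sum_congr rfl fun a ha => by rw [hu a ha], Finset.sum_const,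
    nsmul_eq_mul, Real.logb_inv]
  rcases eq_or_ne ((supp p X).card : ℝ) 0 with h | h
  · simp [h]
  · field_simp

theorem two_rpow_entH_eq_card (hp : IsProb p) {X : Ω → A} (hu : UniformOnSupport p X) :
    (2 : ℝ) ^ entH p X = (supp p X).card := by
  rw [entH_eq_logb_card hp.1 hu, Real.rpow_logb two_pos (by norm_num)]
  exact_mod_cast (supp_nonempty hp X).card_pos

theorem dist_comp [DecidableEq B] (hp : ∀ ω, 0 ≤ p ω) (X : Ω → A) (f : A → B) (b : B) :
    dist p (f ∘ X) b = ∑ a ∈ (supp p X).filter (fun a => f a = b), dist p X a := by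
  unfold _root_.dist
  rw [Finset.sum_fiberwise_eq_sum_filter (s := Finset.univ) (g := X)]
  refine (Finset.sum_subset (fun ω hω => ?_) fun ω hω hω' => ?_).symm
  · simp only [Finset.mem_filter, Finset.mem_univ, true_and, Function.comp_apply] at hω ⊢
    exact hω.2
  · simp only [Finset.mem_filter, Finset.mem_univ, true_and, Function.comp_apply] at hω hω'
    by_contra hpω
    exact hω' ⟨apply_mem_supp hp X ((hp ω).lt_of_ne' hpω), hω⟩

/-- `|supp (f ∘ X)|⁻¹ = dist p (f ∘ X) b = |fibre over b| * |supp X|⁻¹`. -/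
theorem card_supp_filter_eq_div [DecidableEq B] (hp : ∀ ω, 0 ≤ p ω) {X : Ω → A}
    {f : A → B} (hX : UniformOnSupport p X) (hfX : UniformOnSupport p (f ∘ X)) {b : B}
    (hb : b ∈ supp p (f ∘ X)) :
    (((supp p X).filter (fun a => f a = b)).card : ℝ)
      = (supp p X).card / (supp p (f ∘ X)).card := by
  have hfiber : ((supp p (f ∘ X)).card : ℝ)⁻¹
      = ((supp p X).filter (fun a => f a = b)).card * ((supp p X).card : ℝ)⁻¹ := by
    rw [← hfX b hb, dist_comp hp,
      Finset.sum_congr rfl fun a ha => hX a (Finset.mem_filter.mp ha).1, Finset.sum_const,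
      nsmul_eq_mul]
  have hfX_pos : (0 : ℝ) < (supp p (f ∘ X)).card := by
    exact_mod_cast Finset.card_pos.mpr ⟨b, hb⟩
  have hX_ne : ((supp p X).card : ℝ) ≠ 0 := by
    rintro h
    rw [h, inv_zero, mul_zero] at hfiber
    exact (inv_pos.mpr hfX_pos).ne' hfiber
  field_simp at hfiber ⊢
  linarith

end

theorem quasi_uniform_constant_extension_count
    {Ω N A : Type*} [Fintype Ω]
    (p : Ω → ℝ) (X : N → Ω → A)
    (hp : IsProb p) (hqu : QuasiUniformFamily p X)
    (α β : Finset N) (hαβ : α ⊆ β)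
    (xα : {i // i ∈ α} → A) (hxα : xα ∈ supp p (tupleOn X α)) :
    ((((supp p (tupleOn X β)).filter
        (fun xβ => (fun i : {i // i ∈ α} => xβ ⟨i.1, hαβ i.2⟩) = xα)).card : ℝ))
      = (2 : ℝ) ^ (entH p (tupleOn X β) - entH p (tupleOn X α)) := by
  have hrestrict : tupleOn X α = (fun xβ i => xβ ⟨i.1, hαβ i.2⟩) ∘ tupleOn X β := rfl
  have huα := hqu α
  rw [hrestrict] at hxα huα
  rw [Real.rpow_sub two_pos, two_rpow_entH_eq_card hp (hqu β), two_rpow_entH_eq_card hp (hqu α),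
    hrestrict]
  exact card_supp_filter_eq_div hp.1 (hqu β) huα hxα
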